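/- For all integers d ≥ 1, n ≥ 1 and k ≥ 0: Σ_{i=0}^{k} (−1)^i · C(d+1,i) · (n(k−i)+1)^d = d! · n^d · B_{d+1}(k + 1/n), where B_{d+1} is the cardinal B-spline of order d+1. -/

import Mathlib

/-!
Integrating truncated powers term by term shows, by induction on `d`, that for every `x`
`B_{d+1}(x) = (1/d!) ∑_{i=0}^{d+1} (-1)^i C(d+1,i) (x-i)_+^d`; reading `t_+^0` as the indicator
of `t ≥ 0` makes this exact also for `d = 0`. At `x = k + 1/n` the term `n^d (x-i)_+^d` equals
`(n(k-i)+1)^d` for `i ≤ k` and vanishes for `i > k`.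
-/

open MeasureTheory Real Filter Finset

/-- The cardinal B-spline of order `d`: `B_1` is the indicator of `[0,1)`,
and `B_d = B_1 * B_{d-1}` (convolution) for `d ≥ 2`. -/
noncomputable def Bspline : ℕ → ℝ → ℝ
  | 0, _ => 0
  | 1, x => if 0 ≤ x ∧ x < 1 then 1 else 0
  | (d + 2), x => ∫ y : ℝ, (if 0 ≤ x - y ∧ x - y < 1 then (1 : ℝ) else 0) * Bspline (d + 1) y

noncomputable def truncPow (m : ℕ) (t : ℝ) : ℝ := if 0 ≤ t then t ^ m else 0

lemma truncPow_of_nonneg {m : ℕ} {t : ℝ} (ht : 0 ≤ t) : truncPow m t = t ^ m := if_pos ht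

lemma truncPow_of_neg (m : ℕ) {t : ℝ} (ht : t < 0) : truncPow m t = 0 := if_neg ht.not_ge

lemma truncPow_of_nonpos {m : ℕ} (hm : m ≠ 0) {t : ℝ} (ht : t ≤ 0) : truncPow m t = 0 := by
  rcases ht.lt_or_eq with ht | rfl
  · exact truncPow_of_neg m ht
  · simp [truncPow, hm]

lemma monotone_truncPow (m : ℕ) : Monotone (truncPow m) := by
  intro s t hst
  rcases lt_or_ge s 0 with hs | hs
  · rw [truncPow_of_neg m hs, truncPow]
    split_ifs with ht
    exacts [pow_nonneg ht m, le_rfl]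
  · rw [truncPow_of_nonneg hs, truncPow_of_nonneg (hs.trans hst)]
    exact pow_le_pow_left₀ hs hst m

lemma truncPow_succ_eq_max_pow (m : ℕ) (t : ℝ) : truncPow (m + 1) t = max t 0 ^ (m + 1) := by
  rcases lt_or_ge t 0 with ht | ht
  · simp [truncPow_of_neg _ ht, max_eq_right ht.le]
  · rw [truncPow_of_nonneg ht, max_eq_left ht]

lemma continuous_truncPow_succ (m : ℕ) : Continuous (truncPow (m + 1)) := by
  simp_rw [funext (truncPow_succ_eq_max_pow m)]
  fun_prop

-- Only a right derivative: at `t = 0` its value `(m + 1) * 0 ^ m` is why `truncPow 0 0 = 1`.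
lemma hasDerivWithinAt_truncPow_succ (m : ℕ) (t : ℝ) :
    HasDerivWithinAt (truncPow (m + 1)) ((m + 1) * truncPow m t) (Set.Ici t) t := by
  rcases lt_or_ge t 0 with ht | ht
  · rw [truncPow_of_neg m ht, mul_zero]
    refine ((hasDerivAt_const t (0 : ℝ)).congr_of_eventuallyEq ?_).hasDerivWithinAt
    filter_upwards [Iio_mem_nhds ht] with s hs using truncPow_of_neg _ hs
  · rw [truncPow_of_nonneg ht]
    have hpow : HasDerivWithinAt (· ^ (m + 1)) ((m + 1) * t ^ m) (Set.Ici t) t := by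
      simpa using hasDerivWithinAt_pow (m + 1) t (s := Set.Ici t)
    exact hpow.congr (fun s hs => truncPow_of_nonneg (ht.trans hs)) (truncPow_of_nonneg ht)

lemma integral_truncPow (m : ℕ) (a b : ℝ) :
    ∫ t in a..b, truncPow m t = (truncPow (m + 1) b - truncPow (m + 1) a) / (m + 1) := by
  rw [sub_div]
  refine intervalIntegral.integral_eq_sub_of_hasDeriv_right
    ((continuous_truncPow_succ m).div_const _).continuousOn (fun t _ => ?_)
    (monotone_truncPow m).intervalIntegrable
  exact ((hasDerivWithinAt_truncPow_succ m t).Ioi_of_Ici.div_const _).congr_deriv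
    (mul_div_cancel_left₀ _ (by positivity))

theorem sum_range_alternating_choose_succ_mul {R : Type*} [CommRing R] (N : ℕ) (f : ℕ → R) :
    ∑ i ∈ range (N + 2), (-1) ^ i * ((N + 1).choose i : R) * f i =
      ∑ i ∈ range (N + 1), (-1) ^ i * (N.choose i : R) * (f i - f (i + 1)) := by
  have hshift : ∑ i ∈ range (N + 1), (-1) ^ i * (N.choose i : R) * f i =
      f 0 + ∑ i ∈ range (N + 1), (-1) ^ (i + 1) * (N.choose (i + 1) : R) * f (i + 1) := by
    rw [sum_range_succ', sum_range_succ, Nat.choose_succ_self]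
    simp [add_comm]
  simp only [sum_range_succ' _ (N + 1), Nat.choose_succ_succ', Nat.cast_add, mul_add, add_mul,
    sum_add_distrib, mul_sub, sum_sub_distrib, hshift]
  simp only [pow_succ, pow_zero, Nat.choose_zero_right, Nat.cast_one, one_mul, mul_one, mul_neg,
    neg_mul, sum_neg_distrib]
  ring

lemma bspline_succ_succ (d : ℕ) (x : ℝ) :
    Bspline (d + 2) x = ∫ y in x - 1..x, Bspline (d + 1) y := by
  rw [intervalIntegral.integral_of_le (by linarith), ← integral_indicator measurableSet_Ioc,
    Bspline]
  congr 1 with y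
  have hmem : 0 ≤ x - y ∧ x - y < 1 ↔ x - 1 < y ∧ y ≤ x := by
    constructor <;> rintro ⟨_, _⟩ <;> constructor <;> linarith
  simp only [Set.indicator_apply, Set.mem_Ioc, hmem, ite_mul, one_mul, zero_mul]

lemma bspline_one (x : ℝ) : Bspline 1 x = truncPow 0 x - truncPow 0 (x - 1) := by
  simp only [Bspline, truncPow, pow_zero, sub_nonneg]
  split_ifs <;> grind

theorem bspline_succ_eq_sum (d : ℕ) (x : ℝ) :
    Bspline (d + 1) x =
      (d.factorial : ℝ)⁻¹ *
        ∑ i ∈ range (d + 2), (-1) ^ i * ((d + 1).choose i : ℝ) * truncPow d (x - i) := by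
  induction d generalizing x with
  | zero => simp [bspline_one, sum_range_succ, sub_eq_add_neg]
  | succ d ih =>
    have hint (i : ℕ) : IntervalIntegrable
        (fun y => (-1) ^ i * ((d + 1).choose i : ℝ) * truncPow d (y - i)) volume (x - 1) x :=
      ((monotone_truncPow d).comp fun _ _ h => sub_le_sub_right h _).intervalIntegrable.const_mul _
    simp_rw [bspline_succ_succ, ih, intervalIntegral.integral_const_mul]
    rw [intervalIntegral.integral_finsetSum (fun i _ => hint i)]
    simp_rw [intervalIntegral.integral_const_mul, intervalIntegral.integral_comp_sub_right,
      integral_truncPow,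
      sum_range_alternating_choose_succ_mul (d + 1) fun i => truncPow (d + 1) (x - i)]
    rw [Nat.factorial_succ, mul_sum, mul_sum]
    refine sum_congr rfl fun i _ => ?_
    push_cast
    rw [sub_sub, add_comm 1, mul_inv]
    ring

lemma natCast_pow_mul_truncPow_add_inv_sub {d n : ℕ} (hd : d ≠ 0) (hn : 1 ≤ n) (k i : ℕ) :
    (n : ℝ) ^ d * truncPow d (k + 1 / n - i) =
      if i ≤ k then ((n : ℝ) * (k - i) + 1) ^ d else 0 := by
  have hn' : (1 : ℝ) ≤ n := by exact_mod_cast hn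
  have hinv_pos : 0 < 1 / (n : ℝ) := by positivity
  have hinv_le : 1 / (n : ℝ) ≤ 1 := (div_le_one (by positivity)).2 hn'
  split_ifs with hik
  · have hik' : (i : ℝ) ≤ k := by exact_mod_cast hik
    rw [truncPow_of_nonneg (by linarith), ← mul_pow]
    congr 1
    field_simp
    ring
  · have hik' : (k : ℝ) + 1 ≤ i := by exact_mod_cast (not_le.1 hik)
    rw [truncPow_of_nonpos hd (by linarith), mul_zero]

theorem descent_number_eq_bspline (d n k : ℕ) (hd : 1 ≤ d) (hn : 1 ≤ n) :
    ∑ i ∈ Finset.range (k + 1),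
        (-1 : ℝ) ^ i * ((d + 1).choose i : ℝ) * ((n : ℝ) * ((k : ℝ) - (i : ℝ)) + 1) ^ d =
      (d.factorial : ℝ) * (n : ℝ) ^ d * Bspline (d + 1) ((k : ℝ) + 1 / (n : ℝ)) := by
  set g : ℕ → ℝ := fun i =>
    (-1) ^ i * ((d + 1).choose i : ℝ) * ((n : ℝ) ^ d * truncPow d (k + 1 / n - i))
  have heval := natCast_pow_mul_truncPow_add_inv_sub (by omega : d ≠ 0) hn k
  have hleft : ∑ i ∈ range (k + 1), g i = ∑ i ∈ range (k + d + 2), g i :=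
    sum_subset (range_subset_range.2 (by omega)) fun i _ hi => by
      rw [mem_range] at hi
      simp only [g, heval, if_neg (by omega : ¬i ≤ k), mul_zero]
  have hright : ∑ i ∈ range (d + 2), g i = ∑ i ∈ range (k + d + 2), g i :=
    sum_subset (range_subset_range.2 (by omega)) fun i _ hi => by
      rw [mem_range] at hi
      simp only [g, Nat.choose_eq_zero_of_lt (by omega : d + 1 < i), Nat.cast_zero, mul_zero,
        zero_mul]
  calc _ = ∑ i ∈ range (k + 1), g i :=
        sum_congr rfl fun i hi => by
          simp only [g, heval, if_pos (Nat.lt_succ_iff.1 (mem_range.1 hi))]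
    _ = ∑ i ∈ range (d + 2), g i := hleft.trans hright.symm
    _ = _ := by
      rw [bspline_succ_eq_sum, mul_comm (d.factorial : ℝ), mul_assoc,
        mul_inv_cancel_left₀ (by positivity), mul_sum]
      exact sum_congr rfl fun i _ => by ring
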